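/- arXiv:2004.04188 — 2 statements merged into one kernel-verified Lean document; each statement's English description precedes it below -/
import Mathlib

section
/- Let n ≥ 1, let I = {0,1,…,n} be a node set with depot 0 and collection nodes IC = {1,…,n}, let d : I × I → ℝ be nonnegative and satisfy the triangle inequality d(u,w) ≤ d(u,v) + d(v,w) for all u,v,w ∈ I, and let Q > 0 be a real capacity. Let a route be a finite sequence v_0 = 0, v_1, …, v_m, v_{m+1} = 0 with m ≥ 1 and v_1,…,v_m pairwise distinct elements of IC, and let its length be len = Σ_{k=0}^{m} d(v_k, v_{k+1}). If w_1,…,w_m are nonnegative real loads with Σ_{k=1}^{m} w_k ≤ Q, then len ≥ (1/Q) · Σ_{k=1}^{m} (d(0,v_k) + d(v_k,0)) · w_k + (min_{i∈IC} d(0,i) + min_{i∈IC} d(i,0)) · (Q − Σ_{k=1}^{m} w_k)/Q. -/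
/-!
By the triangle inequality the route can be shortcut to the round trip `0 → v_k → 0` for
every visited node `v_k`, so its length dominates `d(0,v_k) + d(v_k,0)` for each `k`, and hence
also `min_{i∈IC} d(0,i) + min_{i∈IC} d(i,0)`. The left-hand side is a convex combination of
these round-trip costs, with weights `w_k / Q` and `(Q - Σ w_k) / Q`.
-/

/-- The set of collection nodes `IC = {1,…,n}`, i.e. all nodes except the depot `0`. -/
def ICset (n : ℕ) : Finset (Fin (n + 1)) := Finset.univ.erase 0

theorem ICset_nonempty (n : ℕ) (hn : 1 ≤ n) : (ICset n).Nonempty :=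
  ⟨⟨1, by omega⟩, by simp [ICset, Fin.ext_iff]⟩

/-- `min_{i ∈ IC} d(0,i)`. -/
def minToIC (n : ℕ) (hn : 1 ≤ n) (d : Fin (n + 1) → Fin (n + 1) → ℝ) : ℝ :=
  (ICset n).inf' (ICset_nonempty n hn) fun i => d 0 i

/-- `min_{i ∈ IC} d(i,0)`. -/
def minFromIC (n : ℕ) (hn : 1 ≤ n) (d : Fin (n + 1) → Fin (n + 1) → ℝ) : ℝ :=
  (ICset n).inf' (ICset_nonempty n hn) fun i => d i 0

open Finset

section Triangle

variable {α β : Type*} [AddCommMonoid β] [PartialOrder β] [IsOrderedAddMonoid β]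
  {d : α → α → β} (hd_tri : ∀ u v w, d u w ≤ d u v + d v w) (v : ℕ → α)

include hd_tri

theorem le_sum_Ico_of_triangle {a b : ℕ} (hab : a < b) :
    d (v a) (v b) ≤ ∑ j ∈ Ico a b, d (v j) (v (j + 1)) := by
  induction b, hab using Nat.le_induction with
  | base => simp
  | succ b hab ih =>
    calc d (v a) (v (b + 1)) ≤ d (v a) (v b) + d (v b) (v (b + 1)) := hd_tri _ _ _
      _ ≤ ∑ j ∈ Ico a b, d (v j) (v (j + 1)) + d (v b) (v (b + 1)) := by gcongr
      _ = ∑ j ∈ Ico a (b + 1), d (v j) (v (j + 1)) := (sum_Ico_succ_top (by omega) _).symm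

theorem round_trip_le_sum_range {m k : ℕ} (hk : 1 ≤ k) (hkm : k ≤ m) :
    d (v 0) (v k) + d (v k) (v (m + 1)) ≤ ∑ j ∈ range (m + 1), d (v j) (v (j + 1)) := by
  rw [range_eq_Ico, ← sum_Ico_consecutive _ (Nat.zero_le k) (by omega : k ≤ m + 1)]
  exact add_le_add (le_sum_Ico_of_triangle hd_tri v (by omega))
    (le_sum_Ico_of_triangle hd_tri v (by omega))

end Triangle

theorem minToIC_add_minFromIC_le {n : ℕ} (hn : 1 ≤ n) (d : Fin (n + 1) → Fin (n + 1) → ℝ)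
    {i : Fin (n + 1)} (hi : i ≠ 0) : minToIC n hn d + minFromIC n hn d ≤ d 0 i + d i 0 := by
  have hi : i ∈ ICset n := mem_erase.mpr ⟨hi, mem_univ i⟩
  exact add_le_add (inf'_le _ hi) (inf'_le _ hi)

theorem one_div_mul_sum_mul_add_mul_sub_div_le {ι : Type*} {s : Finset ι} {c w : ι → ℝ}
    {μ L Q : ℝ} (hQ : 0 < Q) (hc : ∀ k ∈ s, c k ≤ L) (hw : ∀ k ∈ s, 0 ≤ w k)
    (hcap : ∑ k ∈ s, w k ≤ Q) (hμ : μ ≤ L) :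
    1 / Q * ∑ k ∈ s, c k * w k + μ * ((Q - ∑ k ∈ s, w k) / Q) ≤ L := by
  have hcw : ∑ k ∈ s, c k * w k ≤ L * ∑ k ∈ s, w k := by
    rw [mul_sum]
    exact sum_le_sum fun k hk => mul_le_mul_of_nonneg_right (hc k hk) (hw k hk)
  have hslack : μ * (Q - ∑ k ∈ s, w k) ≤ L * (Q - ∑ k ∈ s, w k) :=
    mul_le_mul_of_nonneg_right hμ (by linarith)
  rw [one_div_mul_eq_div, mul_div_assoc', ← add_div, div_le_iff₀ hQ]
  linarith

theorem stmt_0_general (n m : ℕ) (hn : 1 ≤ n) (hm : 1 ≤ m)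
    (d : Fin (n + 1) → Fin (n + 1) → ℝ)
    (hd_tri : ∀ u v w, d u w ≤ d u v + d v w)
    (Q : ℝ) (hQ : 0 < Q)
    (v : ℕ → Fin (n + 1))
    (hv_start : v 0 = 0) (hv_end : v (m + 1) = 0)
    (hv_IC : ∀ k, 1 ≤ k → k ≤ m → v k ≠ 0)
    (w : ℕ → ℝ) (hw_nonneg : ∀ k, 1 ≤ k → k ≤ m → 0 ≤ w k)
    (hcap : ∑ k ∈ Finset.Icc 1 m, w k ≤ Q) :
    (1 / Q) * (∑ k ∈ Finset.Icc 1 m, (d 0 (v k) + d (v k) 0) * w k)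
      + (minToIC n hn d + minFromIC n hn d)
          * ((Q - ∑ k ∈ Finset.Icc 1 m, w k) / Q)
      ≤ ∑ k ∈ Finset.range (m + 1), d (v k) (v (k + 1)) := by
  have round_trip : ∀ k, 1 ≤ k → k ≤ m →
      d 0 (v k) + d (v k) 0 ≤ ∑ j ∈ range (m + 1), d (v j) (v (j + 1)) := by
    intro k hk hkm
    simpa only [hv_start, hv_end] using round_trip_le_sum_range hd_tri v hk hkm
  refine one_div_mul_sum_mul_add_mul_sub_div_le hQ
    (fun k hk => round_trip k (mem_Icc.mp hk).1 (mem_Icc.mp hk).2)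
    (fun k hk => hw_nonneg k (mem_Icc.mp hk).1 (mem_Icc.mp hk).2) hcap ?_
  exact (minToIC_add_minFromIC_le hn d (hv_IC 1 le_rfl hm)).trans (round_trip 1 le_rfl hm)

/-- per-route justification of the routing lower bound used in the
relaxation without routing (IRR) of the SPIRP. -/
theorem stmt_0 (n m : ℕ) (hn : 1 ≤ n) (hm : 1 ≤ m)
    (d : Fin (n + 1) → Fin (n + 1) → ℝ)
    (hd_nonneg : ∀ u v, 0 ≤ d u v)
    (hd_tri : ∀ u v w, d u w ≤ d u v + d v w)
    (Q : ℝ) (hQ : 0 < Q)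
    (v : ℕ → Fin (n + 1))
    (hv_start : v 0 = 0) (hv_end : v (m + 1) = 0)
    (hv_IC : ∀ k, 1 ≤ k → k ≤ m → v k ≠ 0)
    (hv_inj : ∀ k l, 1 ≤ k → k ≤ m → 1 ≤ l → l ≤ m → v k = v l → k = l)
    (w : ℕ → ℝ) (hw_nonneg : ∀ k, 1 ≤ k → k ≤ m → 0 ≤ w k)
    (hcap : ∑ k ∈ Finset.Icc 1 m, w k ≤ Q) :
    (1 / Q) * (∑ k ∈ Finset.Icc 1 m, (d 0 (v k) + d (v k) 0) * w k)
      + (minToIC n hn d + minFromIC n hn d)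
          * ((Q - ∑ k ∈ Finset.Icc 1 m, w k) / Q)
      ≤ ∑ k ∈ Finset.range (m + 1), d (v k) (v (k + 1)) :=
  stmt_0_general n m hn hm d hd_tri Q hQ v hv_start hv_end hv_IC w hw_nonneg hcap
end

section
/- Let n ≥ 1, I = {0,1,…,n} with depot 0 and IC = {1,…,n}; let d : I × I → ℝ be nonnegative and satisfy the triangle inequality; let Q > 0, c ≥ 0, v ≥ 0. Suppose X : {(i,j) ∈ I × I : i ≠ j} → {0,1}, Y : IC → {0,1}, F : {(i,j) ∈ I × I : i ≠ j} → ℝ nonnegative, and W : IC → ℝ nonnegative satisfy: (i) Σ_{j≠i} F(i,j) − Σ_{j≠i} F(j,i) = W(i) for every i ∈ IC; (ii) F(i,j) ≤ Q·X(i,j) for all i ≠ j; (iii) Σ_{j≠i} X(j,i) = Y(i) and Σ_{j≠i} X(i,j) = Y(i) for every i ∈ IC; and (iv) Σ_{i∈IC} X(i,0) = Σ_{i∈IC} X(0,i). Let Wtot = Σ_{i∈IC} W(i), k* = ⌈Wtot/Q⌉ and R = k* − Wtot/Q. Then c·Σ_{i≠j} d(i,j)·X(i,j) + v·Σ_{i∈IC}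 X(0,i) ≥ c·[(1/Q)·Σ_{i∈IC} (d(0,i) + d(i,0))·W(i) + (min_{i∈IC} d(0,i) + min_{i∈IC} d(i,0))·R] + v·k*. -/
open Finset

section Flows

variable {ι : Type*} [Fintype ι] [DecidableEq ι]

def outflow (f : ι → ι → ℝ) (v : ι) : ℝ := ∑ j ∈ univ.filter (fun j => j ≠ v), f v j

def inflow (f : ι → ι → ℝ) (v : ι) : ℝ := ∑ j ∈ univ.filter (fun j => j ≠ v), f j v

lemma sum_sum_ne_comm (f : ι → ι → ℝ) :
    ∑ i, ∑ j ∈ univ.filter (fun j => j ≠ i), f i j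
      = ∑ j, ∑ i ∈ univ.filter (fun i => i ≠ j), f i j := by
  simp only [sum_filter]
  rw [sum_comm]
  exact sum_congr rfl fun j _ => sum_congr rfl fun i _ => if_congr ne_comm rfl rfl

lemma inflow_sub_outflow_eq_sum_erase (f : ι → ι → ℝ) (o : ι) :
    inflow f o - outflow f o = ∑ v ∈ univ.erase o, (outflow f v - inflow f v) := by
  have htotal : ∑ v, (outflow f v - inflow f v) = 0 := by
    rw [sum_sub_distrib, sub_eq_zero]
    exact sum_sum_ne_comm f
  rw [← add_sum_erase _ _ (mem_univ o)] at htotal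
  linarith

lemma sum_mul_outflow_sub_mul_inflow_le {d f : ι → ι → ℝ} (a b : ι → ℝ)
    (hf : ∀ i j, i ≠ j → 0 ≤ f i j) (hab : ∀ i j, i ≠ j → a i - b j ≤ d i j) :
    ∑ v, (a v * outflow f v - b v * inflow f v)
      ≤ ∑ i, ∑ j ∈ univ.filter (fun j => j ≠ i), d i j * f i j := by
  calc ∑ v, (a v * outflow f v - b v * inflow f v)
      = ∑ i, ∑ j ∈ univ.filter (fun j => j ≠ i), (a i - b j) * f i j := by
        simp only [outflow, inflow, sum_sub_distrib, mul_sum, sub_mul]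
        rw [sum_sum_ne_comm fun i j => b j * f i j]
    _ ≤ _ := sum_le_sum fun i _ => sum_le_sum fun j hj =>
        have hij : i ≠ j := (mem_filter.1 hj).2.symm
        mul_le_mul_of_nonneg_right (hab i j hij) (hf i j hij)

lemma sum_dist_mul_net_outflow_add_le_cost (o : ι) {d f : ι → ι → ℝ}
    (hd_tri : ∀ u v w, d u w ≤ d u v + d v w) {m₀ m₁ : ℝ}
    (hm₀ : ∀ j, j ≠ o → m₀ ≤ d o j) (hm₁ : ∀ j, j ≠ o → m₁ ≤ d j o)
    (hf : ∀ i j, i ≠ j → 0 ≤ f i j) :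
    ∑ v ∈ univ.erase o, d v o * (outflow f v - inflow f v) + (m₀ + m₁) * outflow f o
      ≤ ∑ i, ∑ j ∈ univ.filter (fun j => j ≠ i), d i j * f i j := by
  -- the depot gets tail potential `m₀ + m₁` and head potential `0`
  refine le_of_eq_of_le ?_ (sum_mul_outflow_sub_mul_inflow_le
    (fun v => if v = o then m₀ + m₁ else d v o) (fun v => if v = o then 0 else d v o) hf ?_)
  · rw [← add_sum_erase univ _ (mem_univ o), if_pos rfl, if_pos rfl, zero_mul, sub_zero,
      add_comm]
    refine congrArg ((m₀ + m₁) * outflow f o + ·) (sum_congr rfl fun v hv => ?_)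
    simp only [if_neg (ne_of_mem_erase hv)]
    ring
  · intro i j hij
    by_cases hi : i = o
    · subst hi
      simp only [if_pos, if_neg (Ne.symm hij)]
      linarith [hm₀ j (Ne.symm hij), hm₁ j (Ne.symm hij)]
    · by_cases hj : j = o
      · simp [hi, hj]
      · simp only [if_neg hi, if_neg hj]
        linarith [hd_tri i j o]

lemma inflow_sub_outflow_eq_sum_supply (o : ι) {F : ι → ι → ℝ} {W : ι → ℝ}
    (hflow : ∀ v, v ≠ o → outflow F v - inflow F v = W v) :
    inflow F o - outflow F o = ∑ v ∈ univ.erase o, W v :=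
  (inflow_sub_outflow_eq_sum_erase F o).trans
    (sum_congr rfl fun v hv => hflow v (ne_of_mem_erase hv))

lemma sum_supply_le_mul_inflow (o : ι) {Q : ℝ} {X F : ι → ι → ℝ} {W : ι → ℝ}
    (hF_nonneg : ∀ i j, i ≠ j → 0 ≤ F i j) (hFcap : ∀ i j, i ≠ j → F i j ≤ Q * X i j)
    (hflow : ∀ v, v ≠ o → outflow F v - inflow F v = W v) :
    ∑ v ∈ univ.erase o, W v ≤ Q * inflow X o := by
  have hin : inflow F o ≤ Q * inflow X o := by
    rw [inflow, inflow, mul_sum]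
    exact sum_le_sum fun j hj => hFcap j o (mem_filter.1 hj).2
  have hout : 0 ≤ outflow F o :=
    sum_nonneg fun j hj => hF_nonneg o j (mem_filter.1 hj).2.symm
  linarith [inflow_sub_outflow_eq_sum_supply o hflow]

lemma sum_dist_mul_supply_add_le_mul_cost (o : ι) {d : ι → ι → ℝ}
    (hd_tri : ∀ u v w, d u w ≤ d u v + d v w) {m₀ m₁ : ℝ}
    (hm₀ : ∀ j, j ≠ o → m₀ ≤ d o j) (hm₁ : ∀ j, j ≠ o → m₁ ≤ d j o)
    (Q : ℝ) {X F : ι → ι → ℝ} {W : ι → ℝ}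
    (hF_nonneg : ∀ i j, i ≠ j → 0 ≤ F i j) (hFcap : ∀ i j, i ≠ j → F i j ≤ Q * X i j)
    (hflow : ∀ v, v ≠ o → outflow F v - inflow F v = W v)
    (hX_circ : ∀ v, outflow X v = inflow X v) :
    ∑ v ∈ univ.erase o, (d o v + d v o) * W v
        + (m₀ + m₁) * (Q * outflow X o - ∑ v ∈ univ.erase o, W v)
      ≤ Q * ∑ i, ∑ j ∈ univ.filter (fun j => j ≠ i), d i j * X i j := by
  set G : ι → ι → ℝ := fun i j => Q * X i j - F i j
  have hG_out (v : ι) : outflow G v = Q * outflow X v - outflow F v := by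
    simp only [G, outflow, sum_sub_distrib, mul_sum]
  have hG_in (v : ι) : inflow G v = Q * inflow X v - inflow F v := by
    simp only [G, inflow, sum_sub_distrib, mul_sum]
  have hcost_split : Q * ∑ i, ∑ j ∈ univ.filter (fun j => j ≠ i), d i j * X i j
      = ∑ i, ∑ j ∈ univ.filter (fun j => j ≠ i), d i j * F i j
        + ∑ i, ∑ j ∈ univ.filter (fun j => j ≠ i), d i j * G i j := by
    simp only [G, mul_sum, ← sum_add_distrib]
    exact sum_congr rfl fun i _ => sum_congr rfl fun j _ => by ring
  have hcostF := sum_dist_mul_net_outflow_add_le_cost o hd_tri hm₀ hm₁ hF_nonneg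
  -- `G` is bounded through its reversal, a flow for the reversed distance
  have hcostG := sum_dist_mul_net_outflow_add_le_cost o (d := fun i j => d j i) (f := fun i j => G j i)
    (fun u v w => (hd_tri w v u).trans_eq (add_comm _ _)) hm₁ hm₀
    (fun i j hij => sub_nonneg.2 (hFcap j i hij.symm))
  rw [sum_sum_ne_comm fun i j => d j i * G j i] at hcostG
  have hWF : ∑ v ∈ univ.erase o, d v o * (outflow F v - inflow F v)
      = ∑ v ∈ univ.erase o, d v o * W v :=
    sum_congr rfl fun v hv => by rw [hflow v (ne_of_mem_erase hv)]
  have hWG : ∑ v ∈ univ.erase o, d o v * (inflow G v - outflow G v)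
      = ∑ v ∈ univ.erase o, d o v * W v :=
    sum_congr rfl fun v hv => by
      rw [hG_in, hG_out, hX_circ, ← hflow v (ne_of_mem_erase hv)]
      ring
  have hW_split : ∑ v ∈ univ.erase o, (d o v + d v o) * W v
      = ∑ v ∈ univ.erase o, d o v * W v + ∑ v ∈ univ.erase o, d v o * W v := by
    rw [← sum_add_distrib]
    exact sum_congr rfl fun v _ => add_mul _ _ _
  change ∑ v ∈ univ.erase o, d o v * (inflow G v - outflow G v) + (m₁ + m₀) * inflow G o
    ≤ _ at hcostG
  rw [hWG] at hcostG
  rw [hWF] at hcostF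
  rw [hG_in, ← hX_circ] at hcostG
  linear_combination hcostF + hcostG - hcost_split + hW_split
    + (m₀ + m₁) * inflow_sub_outflow_eq_sum_supply o hflow

end Flows

lemma exists_nat_eq_sum_of_zero_or_one {α : Type*} (s : Finset α) (g : α → ℝ)
    (h : ∀ i ∈ s, g i = 0 ∨ g i = 1) : ∃ k : ℕ, ∑ i ∈ s, g i = k := by
  classical
  refine ⟨#{i ∈ s | g i = 1}, ?_⟩
  rw [natCast_card_filter]
  exact sum_congr rfl fun i hi => by rcases h i hi with h | h <;> simp [h]

lemma ceil_div_le_of_le_mul {x Q : ℝ} (hQ : 0 < Q) {k : ℕ} (h : x ≤ Q * k) :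
    (⌈x / Q⌉ : ℝ) ≤ k := by
  exact_mod_cast Int.ceil_le.2 (by push_cast; rw [div_le_iff₀ hQ]; linarith)

lemma one_div_mul_add_mul_ceil_sub_le {Q S T m x V : ℝ} (hQ : 0 < Q) (hm : 0 ≤ m)
    (hV : (⌈x / Q⌉ : ℝ) ≤ V) (h : S + m * (Q * V - x) ≤ Q * T) :
    (1 / Q) * S + m * (⌈x / Q⌉ - x / Q) ≤ T :=
  calc (1 / Q) * S + m * (⌈x / Q⌉ - x / Q) ≤ (1 / Q) * S + m * (V - x / Q) := by gcongr
    _ = (1 / Q) * (S + m * (Q * V - x)) := by field_simp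
    _ ≤ (1 / Q) * (Q * T) := by gcongr
    _ = T := by field_simp

lemma minToIC_le (n : ℕ) (hn : 1 ≤ n) (d : Fin (n + 1) → Fin (n + 1) → ℝ) (j : Fin (n + 1))
    (hj : j ≠ 0) : minToIC n hn d ≤ d 0 j :=
  inf'_le _ (mem_erase.2 ⟨hj, mem_univ j⟩)

lemma minFromIC_le (n : ℕ) (hn : 1 ≤ n) (d : Fin (n + 1) → Fin (n + 1) → ℝ) (j : Fin (n + 1))
    (hj : j ≠ 0) : minFromIC n hn d ≤ d j 0 :=
  inf'_le _ (mem_erase.2 ⟨hj, mem_univ j⟩)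

theorem stmt_7_general (n : ℕ) (hn : 1 ≤ n)
    (d : Fin (n + 1) → Fin (n + 1) → ℝ)
    (hd_nonneg : ∀ u v, 0 ≤ d u v)
    (hd_tri : ∀ u v w, d u w ≤ d u v + d v w)
    (Q c vcost : ℝ) (hQ : 0 < Q) (hc : 0 ≤ c) (hvcost : 0 ≤ vcost)
    (X : Fin (n + 1) → Fin (n + 1) → ℝ)
    (hX_bin : ∀ i j, i ≠ j → X i j = 0 ∨ X i j = 1)
    (Y : Fin (n + 1) → ℝ)
    (F : Fin (n + 1) → Fin (n + 1) → ℝ)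
    (hF_nonneg : ∀ i j, i ≠ j → 0 ≤ F i j)
    (W : Fin (n + 1) → ℝ)
    -- (i) flow conservation at every collection node
    (hflow : ∀ i, i ≠ 0 →
      (∑ j ∈ Finset.univ.filter (fun j => j ≠ i), F i j)
        - (∑ j ∈ Finset.univ.filter (fun j => j ≠ i), F j i) = W i)
    -- (ii) arc flow capacities
    (hFcap : ∀ i j, i ≠ j → F i j ≤ Q * X i j)
    -- (iii) unit in- and out-degree at every visited node
    (hdeg_in : ∀ i, i ≠ 0 →
      (∑ j ∈ Finset.univ.filter (fun j => j ≠ i), X j i) = Y i)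
    (hdeg_out : ∀ i, i ≠ 0 →
      (∑ j ∈ Finset.univ.filter (fun j => j ≠ i), X i j) = Y i)
    -- (iv) depot vehicle balance
    (hdepot : ∑ i ∈ ICset n, X i 0 = ∑ i ∈ ICset n, X 0 i) :
    c * ((1 / Q) * (∑ i ∈ ICset n, (d 0 i + d i 0) * W i)
          + (minToIC n hn d + minFromIC n hn d)
              * ((⌈(∑ i ∈ ICset n, W i) / Q⌉ : ℝ) - (∑ i ∈ ICset n, W i) / Q))
      + vcost * (⌈(∑ i ∈ ICset n, W i) / Q⌉ : ℝ)
    ≤ c * (∑ i, ∑ j ∈ Finset.univ.filter (fun j => j ≠ i), d i j * X i j)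
      + vcost * (∑ i ∈ ICset n, X 0 i) := by
  have hm : 0 ≤ minToIC n hn d + minFromIC n hn d :=
    add_nonneg (le_inf' _ _ fun j _ => hd_nonneg 0 j) (le_inf' _ _ fun j _ => hd_nonneg j 0)
  have hout₀ : outflow X 0 = ∑ i ∈ ICset n, X 0 i := by rw [outflow, filter_ne']; rfl
  have hin₀ : inflow X 0 = ∑ i ∈ ICset n, X 0 i := by rw [inflow, filter_ne', ← hdepot]; rfl
  have hX (v : Fin (n + 1)) : outflow X v = inflow X v := by
    by_cases hv : v = 0
    · rw [hv, hout₀, hin₀]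
    · rw [outflow, inflow, hdeg_out v hv, hdeg_in v hv]
  obtain ⟨k, hk⟩ := exists_nat_eq_sum_of_zero_or_one (ICset n) (X 0) fun i hi =>
    hX_bin 0 i (ne_of_mem_erase hi).symm
  have hcost := sum_dist_mul_supply_add_le_mul_cost 0 hd_tri (minToIC_le n hn d)
    (minFromIC_le n hn d) Q hF_nonneg hFcap hflow hX
  have hsupply := sum_supply_le_mul_inflow 0 hF_nonneg hFcap hflow
  rw [hout₀, hk] at hcost
  rw [hin₀, hk] at hsupply
  have hceil := ceil_div_le_of_le_mul hQ hsupply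
  rw [hk]
  gcongr
  · exact one_div_mul_add_mul_ceil_sub_le hQ hm hceil hcost
  · exact hceil

/-- single-period validity of the relaxation without routing (IRR):
the period travel-plus-vehicle cost of any feasible period routing of formulation IR
is at least the corresponding term of the IRR objective with `V = ⌈Wtot/Q⌉` vehicles
and slack `R = ⌈Wtot/Q⌉ − Wtot/Q`. -/
theorem stmt_7 (n : ℕ) (hn : 1 ≤ n)
    (d : Fin (n + 1) → Fin (n + 1) → ℝ)
    (hd_nonneg : ∀ u v, 0 ≤ d u v)
    (hd_tri : ∀ u v w, d u w ≤ d u v + d v w)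
    (Q c vcost : ℝ) (hQ : 0 < Q) (hc : 0 ≤ c) (hvcost : 0 ≤ vcost)
    (X : Fin (n + 1) → Fin (n + 1) → ℝ)
    (hX_bin : ∀ i j, i ≠ j → X i j = 0 ∨ X i j = 1)
    (Y : Fin (n + 1) → ℝ)
    (hY_bin : ∀ i, i ≠ 0 → Y i = 0 ∨ Y i = 1)
    (F : Fin (n + 1) → Fin (n + 1) → ℝ)
    (hF_nonneg : ∀ i j, i ≠ j → 0 ≤ F i j)
    (W : Fin (n + 1) → ℝ)
    (hW_nonneg : ∀ i, i ≠ 0 → 0 ≤ W i)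
    -- (i) flow conservation at every collection node
    (hflow : ∀ i, i ≠ 0 →
      (∑ j ∈ Finset.univ.filter (fun j => j ≠ i), F i j)
        - (∑ j ∈ Finset.univ.filter (fun j => j ≠ i), F j i) = W i)
    -- (ii) arc flow capacities
    (hFcap : ∀ i j, i ≠ j → F i j ≤ Q * X i j)
    -- (iii) unit in- and out-degree at every visited node
    (hdeg_in : ∀ i, i ≠ 0 →
      (∑ j ∈ Finset.univ.filter (fun j => j ≠ i), X j i) = Y i)
    (hdeg_out : ∀ i, i ≠ 0 →
      (∑ j ∈ Finset.univ.filter (fun j => j ≠ i), X i j) = Y i)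
    -- (iv) depot vehicle balance
    (hdepot : ∑ i ∈ ICset n, X i 0 = ∑ i ∈ ICset n, X 0 i) :
    c * ((1 / Q) * (∑ i ∈ ICset n, (d 0 i + d i 0) * W i)
          + (minToIC n hn d + minFromIC n hn d)
              * ((⌈(∑ i ∈ ICset n, W i) / Q⌉ : ℝ) - (∑ i ∈ ICset n, W i) / Q))
      + vcost * (⌈(∑ i ∈ ICset n, W i) / Q⌉ : ℝ)
    ≤ c * (∑ i, ∑ j ∈ Finset.univ.filter (fun j => j ≠ i), d i j * X i j)
      + vcost * (∑ i ∈ ICset n, X 0 i) :=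
  stmt_7_general n hn d hd_nonneg hd_tri Q c vcost hQ hc hvcost X hX_bin Y F hF_nonneg W hflow hFcap
    hdeg_in hdeg_out hdepot
end
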